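/- For every natural number n ≥ 0, the open-chain AND-OR network whose run-length list consists of n + 2 copies of 1 (i.e., operators strictly alternating between AND and OR) satisfies 𝔉([1,1,…,1]) = a_{n+5}, where (a_k) is the Padovan sequence. -/
import Mathlib


/-- The open-chain AND-OR network map determined by an operator list `ops`
(`true` = AND, `false` = OR), on `ops.length + 2` nodes. -/
def chainMap (ops : List Bool) (x : Fin (ops.length + 2) → Bool) :
    Fin (ops.length + 2) → Bool := fun i =>
  if h0 : (i : ℕ) = 0 then x ⟨1, by omega⟩
  else if hn : (i : ℕ) = ops.length + 1 then x ⟨ops.length, by omega⟩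
  else
    have hi : 1 ≤ (i : ℕ) ∧ (i : ℕ) ≤ ops.length := by
      have := i.isLt; omega
    if ops.get ⟨(i : ℕ) - 1, by omega⟩
    then x ⟨(i : ℕ) - 1, by omega⟩ && x ⟨(i : ℕ) + 1, by omega⟩
    else x ⟨(i : ℕ) - 1, by omega⟩ || x ⟨(i : ℕ) + 1, by omega⟩

/-- `F ops` is the number of fixed points of the open-chain AND-OR network. -/
noncomputable def F (ops : List Bool) : ℕ :=
  Nat.card {x : Fin (ops.length + 2) → Bool // chainMap ops x = x}

/-- Run-length encoding: block `j` (1-based) consists of `k_j` copies of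
`true` if `j` is odd and `false` if `j` is even. -/
def runOps : List ℕ → List Bool
  | [] => []
  | k :: t => List.replicate k true ++ (runOps t).map (fun b => !b)

/-- `Fr L` = 𝔉(L), the number of fixed points of the open-chain AND-OR
network with run-length list `L`. -/
noncomputable def Fr (L : List ℕ) : ℕ := F (runOps L)

/-- The Padovan sequence: `a 0 = a 1 = a 2 = 1` and `a (k+3) = a (k+1) + a k`. -/
def padovan : ℕ → ℕ
  | 0 => 1
  | 1 => 1
  | 2 => 1
  | n + 3 => padovan (n + 1) + padovan n

def gate (op a c : Bool) : Bool := if op then a && c else a || c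

def partOK (ops : List Bool) (x : Fin (ops.length + 2) → Bool) : Prop :=
  x ⟨ops.length + 1, by omega⟩ = x ⟨ops.length, by omega⟩ ∧
  ∀ j : Fin ops.length,
    x ⟨(j : ℕ) + 1, by have := j.isLt; omega⟩ =
      gate (ops.get j) (x ⟨(j : ℕ), by have := j.isLt; omega⟩)
        (x ⟨(j : ℕ) + 2, by have := j.isLt; omega⟩)

instance partOK.dec (ops : List Bool) : DecidablePred (partOK ops) := fun x => by
  unfold partOK; infer_instance

lemma chainMap_zero (ops : List Bool) (x : Fin (ops.length + 2) → Bool) :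
    chainMap ops x ⟨0, by omega⟩ = x ⟨1, by omega⟩ := by
  simp [chainMap]

lemma chainMap_last (ops : List Bool) (x : Fin (ops.length + 2) → Bool) :
    chainMap ops x ⟨ops.length + 1, by omega⟩ = x ⟨ops.length, by omega⟩ := by
  simp [chainMap]

lemma chainMap_mid (ops : List Bool) (x : Fin (ops.length + 2) → Bool) (j : Fin ops.length) :
    chainMap ops x ⟨(j : ℕ) + 1, by have := j.isLt; omega⟩ =
      gate (ops.get j) (x ⟨(j : ℕ), by have := j.isLt; omega⟩)
        (x ⟨(j : ℕ) + 2, by have := j.isLt; omega⟩) := by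
  have hj := j.isLt
  rw [chainMap]
  rw [dif_neg (by simp), dif_neg (by simp; omega)]
  rfl

lemma fix_iff (ops : List Bool) (x : Fin (ops.length + 2) → Bool) :
    chainMap ops x = x ↔ x ⟨1, by omega⟩ = x ⟨0, by omega⟩ ∧ partOK ops x := by
  constructor
  · intro h
    have h' := fun i => congrFun h i
    refine ⟨?_, ?_, ?_⟩
    · have := h' ⟨0, by omega⟩; rwa [chainMap_zero] at this
    · have := h' ⟨ops.length + 1, by omega⟩; rw [chainMap_last] at this; exact this.symm
    · intro j
      have := h' ⟨(j : ℕ) + 1, by have := j.isLt; omega⟩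
      rw [chainMap_mid] at this; exact this.symm
  · rintro ⟨h0, hl, hm⟩
    funext i
    rcases i with ⟨iv, hiv⟩
    rcases Nat.eq_zero_or_pos iv with h | h
    · subst h; rw [chainMap_zero]; exact h0
    · by_cases he : iv = ops.length + 1
      · subst he; rw [chainMap_last]; exact hl.symm
      · have hlt : iv - 1 < ops.length := by omega
        have : (⟨iv, hiv⟩ : Fin (ops.length + 2)) = ⟨(iv - 1) + 1, by omega⟩ := by
          ext; simp; omega
        rw [this, chainMap_mid ops x ⟨iv - 1, hlt⟩]
        have := (hm ⟨iv - 1, hlt⟩).symm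
        convert this using 3 <;> simp <;> omega

def cnt : Bool → Bool → List Bool → ℕ
  | a, b, [] => if a = b then 1 else 0
  | a, b, op :: ops =>
      (if b = gate op a true then cnt b true ops else 0) +
      (if b = gate op a false then cnt b false ops else 0)

def Hcnt (ops : List Bool) (a b : Bool) : ℕ :=
  (Finset.univ.filter fun x : Fin (ops.length + 2) → Bool =>
    x ⟨0, by omega⟩ = a ∧ x ⟨1, by omega⟩ = b ∧ partOK ops x).card

lemma H_nil (a b : Bool) : Hcnt [] a b = if a = b then 1 else 0 := by
  cases a <;> cases b <;> decide

lemma comp_succ_apply {n : ℕ} (x : Fin (n + 1) → Bool) (k : ℕ) (h : k < n) :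
    (x ∘ Fin.succ) ⟨k, h⟩ = x ⟨k + 1, by omega⟩ := rfl

lemma partOK_cons (op : Bool) (ops : List Bool)
    (x : Fin (ops.length + 3) → Bool) :
    partOK (op :: ops) x ↔
      (x ⟨1, by omega⟩ = gate op (x ⟨0, by omega⟩) (x ⟨2, by omega⟩) ∧
        partOK ops (x ∘ Fin.succ)) := by
  constructor
  · rintro ⟨hb, hm⟩
    refine ⟨hm ⟨0, by simp⟩, ?_, ?_⟩
    · rw [comp_succ_apply, comp_succ_apply]; exact hb
    · intro j
      rcases j with ⟨k, hk⟩
      have := hm ⟨k + 1, by simpa using Nat.succ_lt_succ hk⟩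
      rw [comp_succ_apply, comp_succ_apply, comp_succ_apply]
      exact this
  · rintro ⟨hg, hb, hm⟩
    refine ⟨?_, ?_⟩
    · rw [comp_succ_apply, comp_succ_apply] at hb; exact hb
    · rintro ⟨jv, hjv⟩
      rcases Nat.eq_zero_or_pos jv with h | h
      · subst h; exact hg
      · obtain ⟨k, rfl⟩ : ∃ k, jv = k + 1 := ⟨jv - 1, by omega⟩
        have := hm ⟨k, by simpa using Nat.lt_of_succ_lt_succ hjv⟩
        rw [comp_succ_apply, comp_succ_apply, comp_succ_apply] at this
        exact this

lemma cons_mk_zero {n : ℕ} (a : Bool) (y : Fin (n+1) → Bool) (h : 0 < n+2) :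
    (Fin.cons a y : Fin (n+2) → Bool) ⟨0, h⟩ = a := rfl

lemma cons_mk_succ {n : ℕ} (a : Bool) (y : Fin (n+1) → Bool) (k : ℕ) (h : k+1 < n+2) :
    (Fin.cons a y : Fin (n+2) → Bool) ⟨k+1, h⟩ = y ⟨k, by omega⟩ := rfl

lemma H_piece (op : Bool) (ops : List Bool) (a b c : Bool) :
    ((Finset.univ.filter fun x : Fin (ops.length + 3) → Bool =>
      x ⟨0, by omega⟩ = a ∧ x ⟨1, by omega⟩ = b ∧ partOK (op :: ops) x).filter
        fun x => x ⟨2, by omega⟩ = c).card =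
    if b = gate op a c then Hcnt ops b c else 0 := by
  split_ifs with h
  · rw [Hcnt]
    refine Finset.card_bij' (fun x _ => x ∘ Fin.succ) (fun y _ => Fin.cons a y) ?_ ?_ ?_ ?_
    · intro x hx
      simp only [Finset.mem_filter, Finset.mem_univ, true_and] at hx ⊢
      obtain ⟨⟨h0, h1, hP⟩, h2⟩ := hx
      rw [partOK_cons] at hP
      exact ⟨h1, h2, hP.2⟩
    · intro y hy
      simp only [Finset.mem_filter, Finset.mem_univ, true_and] at hy ⊢
      obtain ⟨h0, h1, hP⟩ := hy
      have hc : (Fin.cons a y : Fin (ops.length + 3) → Bool) ∘ Fin.succ = y := by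
        funext i; exact Fin.cons_succ (α := fun _ => Bool) a y i
      refine ⟨⟨?_, ?_, ?_⟩, ?_⟩
      · exact cons_mk_zero a y _
      · rw [cons_mk_succ]; exact h0
      · rw [partOK_cons]
        refine ⟨?_, by rw [hc]; exact hP⟩
        rw [cons_mk_succ, cons_mk_succ, cons_mk_zero]
        rw [h0, h1]; exact h
      · rw [cons_mk_succ]; exact h1
    · intro x hx
      simp only [Finset.mem_filter, Finset.mem_univ, true_and] at hx
      have h0 : x ⟨0, by omega⟩ = a := hx.1.1
      show (Fin.cons a (x ∘ Fin.succ) : Fin (ops.length + 3) → Bool) = x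
      funext i
      rcases i with ⟨iv, hiv⟩
      match iv, hiv with
      | 0, h => rw [cons_mk_zero]; exact h0.symm
      | k+1, h => rw [cons_mk_succ]; rfl
    · intro y hy
      show (Fin.cons a y : Fin (ops.length + 3) → Bool) ∘ Fin.succ = y
      funext i; exact Fin.cons_succ (α := fun _ => Bool) a y i
  · rw [Finset.card_eq_zero, Finset.filter_eq_empty_iff]
    rintro x hx h2
    simp only [Finset.mem_filter, Finset.mem_univ, true_and] at hx
    obtain ⟨h0, h1, hP⟩ := hx
    rw [partOK_cons] at hP
    exact h (by rw [← h1, hP.1, h0, h2])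

lemma H_cons (op : Bool) (ops : List Bool) (a b : Bool) :
    Hcnt (op :: ops) a b =
      (if b = gate op a true then Hcnt ops b true else 0) +
      (if b = gate op a false then Hcnt ops b false else 0) := by
  rw [Hcnt]
  rw [← Finset.card_filter_add_card_filter_not
    (p := fun x : Fin (ops.length + 3) → Bool => x ⟨2, by omega⟩ = true)]
  congr 1
  · exact H_piece op ops a b true
  · rw [← H_piece op ops a b false]
    congr 1
    apply Finset.filter_congr
    intro x _
    simp

lemma H_eq_cnt : ∀ (ops : List Bool) (a b : Bool), Hcnt ops a b = cnt a b ops := by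
  intro ops
  induction ops with
  | nil => exact H_nil
  | cons op ops ih =>
    intro a b
    rw [H_cons, cnt, ih, ih]

lemma F_eq (ops : List Bool) :
    F ops = cnt true true ops + cnt false false ops := by
  rw [F, Nat.card_eq_fintype_card, Fintype.card_subtype]
  rw [← H_eq_cnt, ← H_eq_cnt, Hcnt, Hcnt]
  rw [← Finset.card_filter_add_card_filter_not
    (p := fun x : Fin (ops.length + 2) → Bool => x ⟨0, by omega⟩ = true)]
  simp only [Finset.filter_filter]
  congr 1
  · congr 1
    apply Finset.filter_congr
    intro x _
    rw [fix_iff]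
    constructor
    · rintro ⟨⟨h1, h2⟩, h0⟩
      exact ⟨h0, by rw [h1, h0], h2⟩
    · rintro ⟨h0, h1, h2⟩
      exact ⟨⟨by rw [h0, h1], h2⟩, h0⟩
  · congr 1
    apply Finset.filter_congr
    intro x _
    rw [fix_iff]
    simp only [Bool.not_eq_true]
    constructor
    · rintro ⟨⟨h1, h2⟩, h0⟩
      exact ⟨h0, by rw [h1, h0], h2⟩
    · rintro ⟨h0, h1, h2⟩
      exact ⟨⟨by rw [h0, h1], h2⟩, h0⟩

lemma runOps_step (k : ℕ) :
    runOps (List.replicate (k + 2) 1) = true :: false :: runOps (List.replicate k 1) := by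
  rw [List.replicate_succ, List.replicate_succ]
  simp only [runOps]
  simp [List.map_map, Function.comp_def, Bool.not_not]

lemma key (k : ℕ) :
    cnt true true (runOps (List.replicate (k + 2) 1)) = padovan (k + 2) ∧
    cnt true false (runOps (List.replicate (k + 2) 1)) = padovan (k + 1) ∧
    cnt false false (runOps (List.replicate (k + 2) 1)) = padovan (k + 3) := by
  induction k using Nat.strong_induction_on with
  | _ k ih =>
    match k with
    | 0 => decide
    | 1 => decide
    | k + 2 =>
      obtain ⟨h1, h2, h3⟩ := ih k (by omega)
      rw [runOps_step (k + 2)]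
      refine ⟨?_, ?_, ?_⟩
      · have e : cnt true true (true :: false :: runOps (List.replicate (k+2) 1)) =
            cnt true true (runOps (List.replicate (k+2) 1)) +
            cnt true false (runOps (List.replicate (k+2) 1)) := by simp [cnt, gate]
        rw [e, h1, h2]
        show padovan (k + 2) + padovan (k + 1) = padovan ((k + 1) + 3)
        conv_rhs => rw [padovan]
      · have e : cnt true false (true :: false :: runOps (List.replicate (k+2) 1)) =
            cnt false false (runOps (List.replicate (k+2) 1)) := by simp [cnt, gate]
        rw [e, h3]
      · have e : cnt false false (true :: false :: runOps (List.replicate (k+2) 1)) =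
            cnt true true (runOps (List.replicate (k+2) 1)) +
            cnt false false (runOps (List.replicate (k+2) 1)) := by simp [cnt, gate]
        rw [e, h1, h3]
        show padovan (k + 2) + padovan (k + 3) = padovan ((k + 2) + 3)
        conv_rhs => rw [padovan]
        rw [Nat.add_comm]


/-- the strictly alternating open chain with run-length list
`n + 2` copies of `1` has `a_{n+5}` fixed points, `a` the Padovan sequence. -/
theorem andor_open_chain_alternating_count (n : ℕ) :
    Fr (List.replicate (n + 2) 1) = padovan (n + 5) := by
  obtain ⟨h1, -, h3⟩ := key n
  rw [Fr, F_eq, h1, h3]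
  show padovan (n + 2) + padovan (n + 3) = padovan ((n + 2) + 3)
  conv_rhs => rw [padovan]
  rw [Nat.add_comm]
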